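/- arXiv:1810.02774 — 3 statements merged into one kernel-verified Lean document; each statement's English description precedes it below -/
import Mathlib

section
/- Let A and B be unital C*-algebras and suppose θ is an inner *-automorphism of A ⊗^γ B of the form θ = (μ ⊗^γ ρ) ∘ τ, where μ : B → A and ρ : A → B are *-isomorphisms and τ is the flip map. Then A and B are simple C*-algebras. -/
/-- `ι` exhibits the complete unital normed algebra `T` as the Banach space projective
tensor product `A ⊗^γ B` of the unital Banach algebras `A` and `B`: the image of `ι`
has dense span, `‖ι a b‖` is dominated by the projective cross norm, and every
contractive bilinear functional extends to a contractive functional on `T` (which pins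
down the norm of `T` as the projective tensor norm). -/
structure IsProjectiveTensorProduct
    (A B T : Type) [NormedRing A] [NormedAlgebra ℂ A]
    [NormedRing B] [NormedAlgebra ℂ B]
    [NormedRing T] [NormedAlgebra ℂ T] [CompleteSpace T]
    (ι : A →L[ℂ] B →L[ℂ] T) : Prop where
  map_one' : ι 1 1 = 1
  map_mul' : ∀ (a c : A) (b d : B), ι a b * ι c d = ι (a * c) (b * d)
  norm_le' : ∀ (a : A) (b : B), ‖ι a b‖ ≤ ‖a‖ * ‖b‖
  dense' : Dense ((Submodule.span ℂ (Set.range fun p : A × B => ι p.1 p.2) : Submodule ℂ T) : Set T)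
  lift' : ∀ β : A →L[ℂ] B →L[ℂ] ℂ, ‖β‖ ≤ 1 →
    ∃ g : T →L[ℂ] ℂ, ‖g‖ ≤ 1 ∧ ∀ (a : A) (b : B), g (ι a b) = β a b

/-- `ι` exhibits `T` as the Banach space projective tensor product `A ⊗^γ B` of the
unital C*-algebras `A` and `B`, as a Banach `*`-algebra. -/
structure IsProjectiveStarTensorProduct
    (A B T : Type) [CStarAlgebra A] [CStarAlgebra B]
    [NormedRing T] [StarRing T] [NormedAlgebra ℂ T] [CompleteSpace T]
    (ι : A →L[ℂ] B →L[ℂ] T)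
    extends IsProjectiveTensorProduct A B T ι : Prop where
  map_star' : ∀ (a : A) (b : B), star (ι a b) = ι (star a) (star b)

/-! Passing to the quotient by a closed ideal `I` of `A`, the map `π ⊗^γ id` kills the closure
of `I ⊗ B`, which is an ideal of `A ⊗^γ B`, but not `1 ⊗ b` for `b ≠ 0` unless `I = A`. If `I`
contains some `a ≠ 0`, the inner automorphism sends `a ⊗ 1 ∈ I ⊗ B` to `1 ⊗ ρ a`, which therefore
lies in the closure of `I ⊗ B`; hence `I = A`, and flipping the factors gives the same for `B`.
Instead of forming `(A/I) ⊗^γ B`, the elements of `T` are tested against the functionals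
`(φ ∘ π) ⊗ ψ`, which exist by the universal property of `⊗^γ`. -/

theorem Submodule.exists_dual_ne_zero_of_notMem {𝕜 E : Type*} [RCLike 𝕜] [NormedAddCommGroup E]
    [NormedSpace 𝕜 E] {S : Submodule 𝕜 E} [IsClosed (S : Set E)] {x : E} (hx : x ∉ S) :
    ∃ φ : StrongDual 𝕜 E, φ x ≠ 0 ∧ ∀ y ∈ S, φ y = 0 := by
  obtain ⟨ψ, hψ⟩ := SeparatingDual.exists_ne_zero (R := 𝕜) (x := S.mkQ x)
    (by rwa [Ne, Submodule.mkQ_apply, Submodule.Quotient.mk_eq_zero])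
  refine ⟨ψ.comp S.mkQL, hψ, fun y hy => ?_⟩
  simp [(Submodule.Quotient.mk_eq_zero S).2 hy]

namespace IsProjectiveTensorProduct

variable {A B T : Type} [NormedRing A] [NormedAlgebra ℂ A] [NormedRing B] [NormedAlgebra ℂ B]
  [NormedRing T] [NormedAlgebra ℂ T] [CompleteSpace T] {ι : A →L[ℂ] B →L[ℂ] T}

theorem flip (hT : IsProjectiveTensorProduct A B T ι) : IsProjectiveTensorProduct B A T ι.flip where
  map_one' := hT.map_one'
  map_mul' b d a c := hT.map_mul' a c b d
  norm_le' b a := mul_comm ‖a‖ ‖b‖ ▸ hT.norm_le' a b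
  dense' := by
    have : (Set.range fun p : B × A => ι.flip p.1 p.2) = Set.range fun p : A × B => ι p.1 p.2 :=
      (Equiv.prodComm A B).surjective.range_comp _ |>.symm
    simpa only [this] using hT.dense'
  lift' β hβ := by
    obtain ⟨g, hg, hgβ⟩ := hT.lift' β.flip (by rwa [ContinuousLinearMap.opNorm_flip])
    exact ⟨g, hg, fun b a => hgβ a b⟩

theorem exists_extension (hT : IsProjectiveTensorProduct A B T ι) (β : A →L[ℂ] B →L[ℂ] ℂ) :
    ∃ g : StrongDual ℂ T, ∀ a b, g (ι a b) = β a b := by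
  set c : ℝ := ‖β‖ + 1
  have hc : 0 < c := by positivity
  obtain ⟨g, -, hg⟩ := hT.lift' ((c⁻¹ : ℂ) • β) <| by
    refine (ContinuousLinearMap.opNorm_smul_le _ _).trans ?_
    rw [norm_inv, Complex.norm_real, Real.norm_of_nonneg hc.le]
    exact inv_mul_le_one_of_le₀ (by linarith) hc.le
  refine ⟨(c : ℂ) • g, fun a b => ?_⟩
  simp [hg, hc.ne']

noncomputable def algTensor (ι : A →L[ℂ] B →L[ℂ] T) : Submodule ℂ T :=
  Submodule.span ℂ (Set.range fun p : A × B => ι p.1 p.2)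

/-- The span of `I ⊗ B` in `A ⊗^γ B`. -/
noncomputable def idealTensor (ι : A →L[ℂ] B →L[ℂ] T) (I : TwoSidedIdeal A) : Submodule ℂ T :=
  Submodule.span ℂ {t | ∃ i ∈ I, ∃ b, ι i b = t}

open scoped Pointwise in
theorem mul_idealTensor_mul_mem (hT : IsProjectiveTensorProduct A B T ι) {I : TwoSidedIdeal A}
    {t k s : T} (ht : t ∈ algTensor ι) (hk : k ∈ idealTensor ι I) (hs : s ∈ algTensor ι) :
    t * k * s ∈ idealTensor ι I := by
  have hleft : algTensor ι * idealTensor ι I ≤ idealTensor ι I := by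
    rw [algTensor, idealTensor, Submodule.span_mul_span, Submodule.span_le]
    rintro _ ⟨_, ⟨⟨c, d⟩, rfl⟩, _, ⟨i, hi, b, rfl⟩, rfl⟩
    exact Submodule.subset_span ⟨c * i, I.mul_mem_left c i hi, d * b, (hT.map_mul' c i d b).symm⟩
  have hright : idealTensor ι I * algTensor ι ≤ idealTensor ι I := by
    rw [algTensor, idealTensor, Submodule.span_mul_span, Submodule.span_le]
    rintro _ ⟨_, ⟨i, hi, b, rfl⟩, _, ⟨⟨c, d⟩, rfl⟩, rfl⟩
    exact Submodule.subset_span ⟨i * c, I.mul_mem_right i c hi, b * d, (hT.map_mul' i c b d).symm⟩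
  exact hright (Submodule.mul_mem_mul (hleft (Submodule.mul_mem_mul ht hk)) hs)

theorem mul_idealTensor_mul_mem_closure (hT : IsProjectiveTensorProduct A B T ι)
    {I : TwoSidedIdeal A} {k : T} (hk : k ∈ idealTensor ι I) (t s : T) :
    t * k * s ∈ closure (idealTensor ι I : Set T) :=
  map_mem_closure₂ (f := fun t s => t * k * s) (by fun_prop) (hT.dense' t) (hT.dense' s)
    fun _ ht _ hs => hT.mul_idealTensor_mul_mem ht hk hs

theorem mem_of_mem_closure_idealTensor (hT : IsProjectiveTensorProduct A B T ι)
    {I : TwoSidedIdeal A} (hI : IsClosed (I : Set A)) {a : A} {b : B} (hb : b ≠ 0)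
    (hab : ι a b ∈ closure (idealTensor ι I : Set T)) : a ∈ I := by
  by_contra ha
  let S : Submodule ℂ A := I.asIdeal.restrictScalars ℂ
  have : IsClosed (S : Set A) := hI
  obtain ⟨φ, hφa, hφS⟩ := Submodule.exists_dual_ne_zero_of_notMem (S := S) ha
  obtain ⟨ψ, hψb⟩ := SeparatingDual.exists_ne_zero (R := ℂ) hb
  obtain ⟨g, hg⟩ := hT.exists_extension (φ.smulRight ψ)
  have hker : idealTensor ι I ≤ LinearMap.ker (g : T →ₗ[ℂ] ℂ) := by
    refine Submodule.span_le.2 ?_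
    rintro _ ⟨i, hi, b, rfl⟩
    simp [hg, hφS i (TwoSidedIdeal.mem_asIdeal.2 hi)]
  have hgab : g (ι a b) = 0 :=
    closure_minimal hker (ContinuousLinearMap.isClosed_ker g) hab
  simp only [hg, ContinuousLinearMap.smulRight_apply] at hgab
  exact mul_ne_zero hφa hψb hgab

theorem eq_bot_or_eq_top_of_conj (hT : IsProjectiveTensorProduct A B T ι) {f : A → B}
    (hf : ∀ a, f a = 0 → a = 0) {u v : T} (hconj : ∀ a, ι 1 (f a) = u * ι a 1 * v)
    (I : TwoSidedIdeal A) (hI : IsClosed (I : Set A)) : I = ⊥ ∨ I = ⊤ := by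
  refine or_iff_not_imp_left.2 fun hbot => ?_
  obtain ⟨a, haI, ha⟩ : ∃ a ∈ I, a ≠ 0 := by
    by_contra! h
    exact hbot (eq_bot_iff.2 fun x hx => (TwoSidedIdeal.mem_bot _).2 (h x hx))
  have hmem := hT.mul_idealTensor_mul_mem_closure (Submodule.subset_span ⟨a, haI, 1, rfl⟩) u v
  rw [← hconj] at hmem
  exact I.eq_top (hT.mem_of_mem_closure_idealTensor hI (mt (hf a) ha) hmem)

end IsProjectiveTensorProduct

theorem simple_of_flip_inner_general {A B T : Type} [CStarAlgebra A] [CStarAlgebra B]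
    [NormedRing T] [StarRing T] [NormedAlgebra ℂ T] [CompleteSpace T]
    {ι : A →L[ℂ] B →L[ℂ] T} (hT : IsProjectiveStarTensorProduct A B T ι)
    (μ : B ≃⋆ₐ[ℂ] A) (ρ : A ≃⋆ₐ[ℂ] B)
    (u : T)
    (hinner : ∀ (a : A) (b : B), ι (μ b) (ρ a) = u * ι a b * star u) :
    (∀ I : TwoSidedIdeal A, IsClosed (I : Set A) → I = ⊥ ∨ I = ⊤) ∧
    (∀ I : TwoSidedIdeal B, IsClosed (I : Set B) → I = ⊥ ∨ I = ⊤) := by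
  exact ⟨hT.eq_bot_or_eq_top_of_conj (f := ρ) (fun a => (map_eq_zero_iff ρ ρ.injective).1)
      fun a => by simpa using hinner a 1,
    hT.flip.eq_bot_or_eq_top_of_conj (f := μ) (fun b => (map_eq_zero_iff μ μ.injective).1)
      fun b => by simpa using hinner 1 b⟩

/-- If the automorphism `(μ ⊗^γ ρ) ∘ τ` of `A ⊗^γ B` is inner (implemented by a
unitary of `A ⊗^γ B`), then `A` and `B` are simple: they have no nontrivial closed
two-sided ideals. -/
theorem simple_of_flip_inner {A B T : Type} [CStarAlgebra A] [CStarAlgebra B]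
    [NormedRing T] [StarRing T] [NormedAlgebra ℂ T] [CompleteSpace T]
    {ι : A →L[ℂ] B →L[ℂ] T} (hT : IsProjectiveStarTensorProduct A B T ι)
    (μ : B ≃⋆ₐ[ℂ] A) (ρ : A ≃⋆ₐ[ℂ] B)
    (u : T) (hu : star u * u = 1 ∧ u * star u = 1)
    (hinner : ∀ (a : A) (b : B), ι (μ b) (ρ a) = u * ι a b * star u) :
    (∀ I : TwoSidedIdeal A, IsClosed (I : Set A) → I = ⊥ ∨ I = ⊤) ∧
    (∀ I : TwoSidedIdeal B, IsClosed (I : Set B) → I = ⊥ ∨ I = ⊤) :=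
  simple_of_flip_inner_general hT μ ρ u hinner
end

section
/- Let A and B be unital C*-algebras and suppose there are *-isomorphisms μ : B → A and ρ : A → B such that the map (μ ⊗^γ ρ) ∘ τ is an inner automorphism of A ⊗^γ B. Then A and B are finite-dimensional; combined with simplicity, A and B are full matrix algebras. -/
/-!
Innerness gives `a ⊗ 1 = u* (1 ⊗ ρ a) u`. Replacing `u*` and `u` by nearby elements `s`, `t` of
the algebraic tensor product changes the right-hand side by at most `‖a‖ / 2`, uniformly in `a`,
and `s (1 ⊗ b) t` lies in `F ⊗ B` for a single finite-dimensional `F ⊆ A`. The slice map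
`L_f = id ⊗ f` of a state `f` of `B` is contractive for the projective norm, sends `a ⊗ 1` to `a`
and `F ⊗ B` into `F`; so every `a` lies within `‖a‖ / 2` of `F`, and Riesz's lemma forces
`A = F`. Finally `B ≅ A`.
-/

open TensorProduct

theorem Submodule.eq_top_of_forall_exists_norm_sub_le {𝕜 E : Type*} [NormedField 𝕜]
    [NormedAddCommGroup E] [NormedSpace 𝕜 E] {F : Submodule 𝕜 E} (hF : IsClosed (F : Set E))
    {r : ℝ} (hr : r < 1) (h : ∀ x, ∃ y ∈ F, ‖x - y‖ ≤ r * ‖x‖) : F = ⊤ := by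
  by_contra hne
  obtain ⟨x, hx⟩ : ∃ x, x ∉ F := by simpa [Submodule.eq_top_iff'] using hne
  obtain ⟨x₀, hx₀, hfar⟩ := riesz_lemma hF ⟨x, hx⟩ (by linarith : (r + 1) / 2 < 1)
  obtain ⟨y, hy, hclose⟩ := h x₀
  have hle : (r + 1) / 2 * ‖x₀‖ ≤ r * ‖x₀‖ := (hfar y hy).trans hclose
  have hx₀_eq : x₀ = 0 := norm_eq_zero.mp (by nlinarith [norm_nonneg x₀])
  exact hx₀ (hx₀_eq ▸ F.zero_mem)

theorem FiniteDimensional.of_forall_exists_norm_sub_le {𝕜 E : Type*} [NontriviallyNormedField 𝕜]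
    [CompleteSpace 𝕜] [NormedAddCommGroup E] [NormedSpace 𝕜 E] (F : Submodule 𝕜 E)
    [FiniteDimensional 𝕜 F] {r : ℝ} (hr : r < 1) (h : ∀ x, ∃ y ∈ F, ‖x - y‖ ≤ r * ‖x‖) :
    FiniteDimensional 𝕜 E := by
  have hF := Submodule.eq_top_of_forall_exists_norm_sub_le F.closed_of_finiteDimensional hr h
  exact Module.Finite.equiv ((LinearEquiv.ofEq F ⊤ hF).trans Submodule.topEquiv)

theorem exists_mem_dense_norm_mul_mul_sub_le {R : Type*} [NonUnitalNormedRing R] {S : Set R}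
    (hS : Dense S) (v w : R) {ε : ℝ} (hε : 0 < ε) :
    ∃ s ∈ S, ∃ t ∈ S, ∀ x, ‖v * x * w - s * x * t‖ ≤ ε * ‖x‖ := by
  let U : Set (R × R) := {p | ‖v - p.1‖ * ‖w‖ + ‖p.1‖ * ‖w - p.2‖ < ε}
  have hU : IsOpen U := isOpen_lt (by fun_prop) continuous_const
  obtain ⟨⟨s, t⟩, ⟨hs, ht⟩, hst⟩ := (hS.prod hS).exists_mem_open hU ⟨(v, w), by simpa [U]⟩
  refine ⟨s, hs, t, ht, fun x => ?_⟩
  have hsplit : v * x * w - s * x * t = (v - s) * x * w + s * (x * (w - t)) := by noncomm_ring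
  calc ‖v * x * w - s * x * t‖
      ≤ ‖v - s‖ * ‖x‖ * ‖w‖ + ‖s‖ * (‖x‖ * ‖w - t‖) := by
        rw [hsplit]
        refine (norm_add_le _ _).trans (add_le_add ?_ ?_)
        · exact (norm_mul_le _ _).trans (by gcongr; exact norm_mul_le _ _)
        · exact (norm_mul_le _ _).trans (by gcongr; exact norm_mul_le _ _)
    _ = (‖v - s‖ * ‖w‖ + ‖s‖ * ‖w - t‖) * ‖x‖ := by ring
    _ ≤ ε * ‖x‖ := by gcongr; exact hst.le

section LeftSlice

variable {K A B : Type*} [Field K] [Ring A] [Algebra K A] [Ring B] [Algebra K B]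

noncomputable def leftSlice (f : B →ₗ[K] K) : A ⊗[K] B →ₗ[K] A :=
  (TensorProduct.rid K A).toLinearMap ∘ₗ f.lTensor A

@[simp]
theorem leftSlice_tmul (f : B →ₗ[K] K) (a : A) (b : B) : leftSlice f (a ⊗ₜ b) = f b • a := by
  simp [leftSlice]

theorem exists_finiteDimensional_leftSlice_mul_mem (f : B →ₗ[K] K) (s t : A ⊗[K] B) :
    ∃ F : Submodule K A, FiniteDimensional K F ∧ ∀ b, leftSlice f (s * (1 ⊗ₜ b) * t) ∈ F := by
  induction s using TensorProduct.induction_on with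
  | zero => exact ⟨⊥, inferInstance, fun b => by simp⟩
  | add s₁ s₂ ih₁ ih₂ =>
    obtain ⟨F₁, _, h₁⟩ := ih₁
    obtain ⟨F₂, _, h₂⟩ := ih₂
    exact ⟨F₁ ⊔ F₂, inferInstance, fun b => by
      simpa only [add_mul, map_add] using Submodule.add_mem_sup (h₁ b) (h₂ b)⟩
  | tmul r w =>
    induction t using TensorProduct.induction_on with
    | zero => exact ⟨⊥, inferInstance, fun b => by simp⟩
    | add t₁ t₂ ih₁ ih₂ =>
      obtain ⟨F₁, _, h₁⟩ := ih₁
      obtain ⟨F₂, _, h₂⟩ := ih₂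
      exact ⟨F₁ ⊔ F₂, inferInstance, fun b => by
        simpa only [mul_add, map_add] using Submodule.add_mem_sup (h₁ b) (h₂ b)⟩
    | tmul p q =>
      refine ⟨K ∙ (r * p), inferInstance, fun b => ?_⟩
      simpa [Algebra.TensorProduct.tmul_mul_tmul] using
        Submodule.smul_mem _ (f (w * b * q)) (Submodule.mem_span_singleton_self (r * p))

end LeftSlice

namespace IsProjectiveTensorProduct

variable {A B T : Type} [NormedRing A] [NormedAlgebra ℂ A] [NormedRing B] [NormedAlgebra ℂ B]
  [NormedRing T] [NormedAlgebra ℂ T] [CompleteSpace T] {ι : A →L[ℂ] B →L[ℂ] T}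

noncomputable def toAlgHom (hT : IsProjectiveTensorProduct A B T ι) : A ⊗[ℂ] B →ₐ[ℂ] T :=
  Algebra.TensorProduct.algHomOfLinearMapTensorProduct (lift ι.toLinearMap₁₂)
    (fun a₁ a₂ b₁ b₂ => by simp [hT.map_mul']) (by simp [hT.map_one'])

@[simp]
theorem toAlgHom_tmul (hT : IsProjectiveTensorProduct A B T ι) (a : A) (b : B) :
    hT.toAlgHom (a ⊗ₜ b) = ι a b :=
  rfl

theorem dense_range_toAlgHom (hT : IsProjectiveTensorProduct A B T ι) :
    Dense (Set.range hT.toAlgHom) := by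
  have hspan : Submodule.span ℂ (Set.range fun p : A × B => ι p.1 p.2) ≤
      LinearMap.range hT.toAlgHom.toLinearMap := by
    rw [Submodule.span_le]
    rintro _ ⟨⟨a, b⟩, rfl⟩
    exact ⟨a ⊗ₜ b, hT.toAlgHom_tmul a b⟩
  exact hT.dense'.mono fun x hx => LinearMap.mem_range.mp (hspan hx)

theorem norm_leftSlice_le (hT : IsProjectiveTensorProduct A B T ι) {f : B →L[ℂ] ℂ}
    (hf : ‖f‖ ≤ 1) (z : A ⊗[ℂ] B) : ‖leftSlice (f : B →ₗ[ℂ] ℂ) z‖ ≤ ‖hT.toAlgHom z‖ := by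
  obtain ⟨g, hg, hgz⟩ := exists_dual_vector'' ℂ (leftSlice (f : B →ₗ[ℂ] ℂ) z)
  have hβ : ‖g.smulRight f‖ ≤ 1 := by
    rw [ContinuousLinearMap.norm_smulRight_apply]
    exact mul_le_one₀ hg (norm_nonneg f) hf
  obtain ⟨G, hG, hGι⟩ := hT.lift' (g.smulRight f) hβ
  have hGg : (G : T →ₗ[ℂ] ℂ) ∘ₗ hT.toAlgHom.toLinearMap = (g : A →ₗ[ℂ] ℂ) ∘ₗ leftSlice f :=
    TensorProduct.ext' fun a b => by simp [hGι, mul_comm]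
  calc ‖leftSlice (f : B →ₗ[ℂ] ℂ) z‖ = ‖g (leftSlice (f : B →ₗ[ℂ] ℂ) z)‖ := by simp [hgz]
    _ = ‖G (hT.toAlgHom z)‖ := congrArg norm (LinearMap.congr_fun hGg z).symm
    _ ≤ ‖G‖ * ‖hT.toAlgHom z‖ := G.le_opNorm _
    _ ≤ ‖hT.toAlgHom z‖ := mul_le_of_le_one_left (norm_nonneg _) hG

theorem finiteDimensional_of_apply_one_eq_mul_mul [NormOneClass A] [Nontrivial B]
    [NormOneClass B] (hT : IsProjectiveTensorProduct A B T ι) (v w : T) (φ : A → B)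
    (hφ : ∀ a, ‖φ a‖ ≤ ‖a‖) (h : ∀ a, ι a 1 = v * ι 1 (φ a) * w) : FiniteDimensional ℂ A := by
  obtain ⟨f, hf, hf1⟩ := exists_dual_vector ℂ (1 : B) (by simp)
  obtain ⟨_, ⟨s, rfl⟩, _, ⟨t, rfl⟩, hst⟩ :=
    exists_mem_dense_norm_mul_mul_sub_le hT.dense_range_toAlgHom v w one_half_pos
  obtain ⟨F, _, hF⟩ := exists_finiteDimensional_leftSlice_mul_mem (f : B →ₗ[ℂ] ℂ) s t
  refine FiniteDimensional.of_forall_exists_norm_sub_le F one_half_lt_one fun a =>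
    ⟨_, hF (φ a), ?_⟩
  have hx : ‖ι 1 (φ a)‖ ≤ ‖a‖ :=
    (hT.norm_le' 1 (φ a)).trans (by rw [norm_one, one_mul]; exact hφ a)
  calc ‖a - leftSlice f (s * (1 ⊗ₜ φ a) * t)‖
      = ‖leftSlice (f : B →ₗ[ℂ] ℂ) (a ⊗ₜ 1 - s * (1 ⊗ₜ φ a) * t)‖ := by simp [hf1]
    _ ≤ ‖hT.toAlgHom (a ⊗ₜ 1 - s * (1 ⊗ₜ φ a) * t)‖ := hT.norm_leftSlice_le hf.le _
    _ = ‖v * ι 1 (φ a) * w - hT.toAlgHom s * ι 1 (φ a) * hT.toAlgHom t‖ := by simp [h]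
    _ ≤ 1 / 2 * ‖a‖ := (hst _).trans (by gcongr)

end IsProjectiveTensorProduct

/-- If the automorphism `(μ ⊗^γ ρ) ∘ τ` of `A ⊗^γ B` is inner, then `A` and `B` are
finite dimensional (and hence, being also simple, full matrix algebras). -/
theorem finiteDimensional_of_flip_inner {A B T : Type} [CStarAlgebra A] [CStarAlgebra B]
    [NormedRing T] [StarRing T] [NormedAlgebra ℂ T] [CompleteSpace T]
    {ι : A →L[ℂ] B →L[ℂ] T} (hT : IsProjectiveStarTensorProduct A B T ι)
    (μ : B ≃⋆ₐ[ℂ] A) (ρ : A ≃⋆ₐ[ℂ] B)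
    (u : T) (hu : star u * u = 1 ∧ u * star u = 1)
    (hinner : ∀ (a : A) (b : B), ι (μ b) (ρ a) = u * ι a b * star u) :
    FiniteDimensional ℂ A ∧ FiniteDimensional ℂ B := by
  have hA : FiniteDimensional ℂ A := by
    rcases subsingleton_or_nontrivial A with hA | hA
    · infer_instance
    have : Nontrivial B := ρ.injective.nontrivial
    refine hT.finiteDimensional_of_apply_one_eq_mul_mul (star u) u ρ
      (fun a => (StarAlgEquiv.norm_map ρ a).le) fun a => ?_
    calc ι a 1 = star u * u * ι a 1 * (star u * u) := by rw [hu.1, one_mul, mul_one]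
      _ = star u * ι (μ 1) (ρ a) * u := by rw [hinner]; noncomm_ring
      _ = star u * ι 1 (ρ a) * u := by rw [map_one]
  exact ⟨hA, ρ.toAlgEquiv.toLinearEquiv.finiteDimensional⟩
end

section
/- Let A be a unital Banach algebra (in particular a Banach algebra arising as a projective tensor product of unital C*-algebras) and suppose an automorphism of the form x ↦ u x u* with unitary u restricts, on elementary tensors of A = A₁ ⊗^γ A₂, to (φ ⊗ ψ)(v ⊗ w) = φ(v) ⊗ ψ(w) where φ(x)=axa*, ψ(x)=bxb* for unitaries a ∈ A₁, b ∈ A₂. Then (a ⊗ b)* u lies in the center of A₁ ⊗^γ A₂. -/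
/-! Writing `p = a ⊗ b`, the hypothesis says `u q u* = p q p*` for every elementary tensor `q`,
so `p* u` commutes with `q`. The centralizer of `p* u` is closed and contains a set with dense
span, hence is everything. -/

theorem Commute.star_mul_of_conj_eq {M : Type*} [Monoid M] [Star M] {p u q : M}
    (hp : star p * p = 1) (hu : star u * u = 1) (h : u * q * star u = p * q * star p) :
    Commute (star p * u) q :=
  calc star p * u * q = star p * (u * q * star u) * u := by simp only [mul_assoc, hu, mul_one]
    _ = q * (star p * u) := by rw [h]; simp only [← mul_assoc, hp, one_mul]

theorem commute_of_dense_span {R T : Type*} [CommSemiring R] [Semiring T] [Algebra R T]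
    [TopologicalSpace T] [SeparatelyContinuousMul T] [T2Space T] {s : Set T} {c : T}
    (hs : Dense (Submodule.span R s : Set T)) (hc : ∀ x ∈ s, Commute c x) (t : T) :
    Commute c t := by
  have hspan : Submodule.span R s ≤ Subalgebra.toSubmodule (Subalgebra.centralizer R {c}) :=
    Submodule.span_le.mpr fun x hx => by simpa [Set.mem_centralizer_iff] using (hc x hx).eq
  have hclosed : closure (Submodule.span R s : Set T) ⊆ Set.centralizer {c} :=
    closure_minimal hspan (Set.isClosed_centralizer _)
  show c * t = t * c
  simpa [Set.mem_centralizer_iff] using hclosed (hs t)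

/-- If conjugation by a unitary `u` of `A₁ ⊗^γ A₂` acts on elementary tensors as
conjugation by `a ⊗ b` for unitaries `a ∈ A₁`, `b ∈ A₂`, then `(a ⊗ b)* u` is central
in `A₁ ⊗^γ A₂`. -/
theorem star_tmul_mul_unitary_mem_center
    {A₁ A₂ T : Type} [CStarAlgebra A₁] [CStarAlgebra A₂]
    [NormedRing T] [StarRing T] [NormedAlgebra ℂ T] [CompleteSpace T]
    {ι : A₁ →L[ℂ] A₂ →L[ℂ] T} (hT : IsProjectiveStarTensorProduct A₁ A₂ T ι)
    (u : T) (hu : star u * u = 1 ∧ u * star u = 1)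
    (a : A₁) (ha : star a * a = 1 ∧ a * star a = 1)
    (b : A₂) (hb : star b * b = 1 ∧ b * star b = 1)
    (h : ∀ (v : A₁) (w : A₂), u * ι v w * star u = ι (a * v * star a) (b * w * star b)) :
    ∀ t : T, (star (ι a b) * u) * t = t * (star (ι a b) * u) := by
  intro t
  refine (commute_of_dense_span (R := ℂ) hT.dense' ?_ t).eq
  rintro _ ⟨⟨v, w⟩, rfl⟩
  refine Commute.star_mul_of_conj_eq ?_ hu.1 ?_
  · rw [hT.map_star', hT.map_mul', ha.1, hb.1, hT.map_one']
  · rw [h, hT.map_star', hT.map_mul', hT.map_mul']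
end
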